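/- arXiv:2308.14518 — 2 statements merged into one kernel-verified Lean document; each statement's English description precedes it below -/
import Mathlib

section
/- For every pair (r,c) with (0,0) < (r,c) ≤ (p,q), every finite set 𝐢 ⊂ ℕ of size r and 𝐣 ⊂ ℕ of size c, and every pair of subsets 𝐢̄ ⊆ 𝐢, 𝐣̄ ⊆ 𝐣 with (𝐢̄,𝐣̄) ≠ (𝐢,𝐣), the Hoeffding projection is conditionally centered: E[p^{r,c}h(Y_{𝐢,𝐣}) | A_{𝐢̄,𝐣̄}] = 0 almost surely. -/
open MeasureTheory ProbabilityTheory Filter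
open scoped BigOperators NNReal Topology

noncomputable section

namespace RCEU

variable {Ω : Type*}

/-- The `a`-th element of the finite set `I ⊂ ℕ`, in increasing order
(junk value `0` when out of range). -/
def nth (I : Finset ℕ) (a : ℕ) : ℕ := (I.sort (· ≤ ·)).getD a 0

/-- A kernel applied to the submatrix of `Y` with rows `I` and columns `J`,
taken in increasing order: `h(Y_{I,J})`. -/
def ker {p q : ℕ} (h : (Fin p → Fin q → ℝ) → ℝ) (Y : ℕ → ℕ → Ω → ℝ)
    (I J : Finset ℕ) (ω : Ω) : ℝ :=
  h fun a b => Y (nth I a) (nth J b) ω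

/-- A symmetric kernel of size `p × q`: a measurable function of `p × q` real matrices,
invariant under all permutations of the rows and of the columns of its argument. -/
def SymKernel (p q : ℕ) (h : (Fin p → Fin q → ℝ) → ℝ) : Prop :=
  Measurable h ∧
    ∀ (M : Fin p → Fin q → ℝ) (σ : Equiv.Perm (Fin p)) (τ : Equiv.Perm (Fin q)),
      h (fun a b => M (σ a) (τ b)) = h M

/-- The σ-algebra `A_{I,J}` generated by the latent variables `(ξ_i)_{i ∈ I}`,
`(η_j)_{j ∈ J}` and `(ζ_{ij})_{i ∈ I, j ∈ J}`. -/
def latentAlg [MeasurableSpace Ω] (ξ η : ℕ → Ω → ℝ) (ζ : ℕ → ℕ → Ω → ℝ)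
    (I J : Finset ℕ) : MeasurableSpace Ω :=
  (⨆ i ∈ I, MeasurableSpace.comap (ξ i) inferInstance) ⊔
    (⨆ j ∈ J, MeasurableSpace.comap (η j) inferInstance) ⊔
    (⨆ i ∈ I, ⨆ j ∈ J, MeasurableSpace.comap (ζ i j) inferInstance)

/-- The Aldous–Hoover–Kallenberg representation of a dissociated RCE matrix `Y`:
`(ξ_i)`, `(η_j)`, `(ζ_{ij})` are mutually independent families of i.i.d. random variables,
each uniform on `[0,1]`, and `Y i j = φ (ξ i) (η j) (ζ i j)` for a measurable `φ`. -/
structure Model [MeasurableSpace Ω] (μ : Measure Ω) (ξ η : ℕ → Ω → ℝ)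
    (ζ : ℕ → ℕ → Ω → ℝ) (φ : ℝ → ℝ → ℝ → ℝ) (Y : ℕ → ℕ → Ω → ℝ) : Prop where
  meas_ξ : ∀ i, Measurable (ξ i)
  meas_η : ∀ j, Measurable (η j)
  meas_ζ : ∀ i j, Measurable (ζ i j)
  indep : iIndepFun
    (Sum.elim ξ (Sum.elim η fun ij : ℕ × ℕ => ζ ij.1 ij.2)) μ
  unif_ξ : ∀ i, μ.map (ξ i) = volume.restrict (Set.Icc (0 : ℝ) 1)
  unif_η : ∀ j, μ.map (η j) = volume.restrict (Set.Icc (0 : ℝ) 1)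
  unif_ζ : ∀ i j, μ.map (ζ i j) = volume.restrict (Set.Icc (0 : ℝ) 1)
  meas_φ : Measurable fun t : ℝ × ℝ × ℝ => φ t.1 t.2.1 t.2.2
  Y_eq : ∀ i j ω, Y i j ω = φ (ξ i ω) (η j ω) (ζ i j ω)

/-- Covariance of two real random variables. -/
def covar [MeasurableSpace Ω] (μ : Measure Ω) (f g : Ω → ℝ) : ℝ :=
  ∫ ω, (f ω - ∫ x, f x ∂μ) * (g ω - ∫ x, g x ∂μ) ∂μ

/-- `ψ` is the family of conditional expectations `ψ^{r,c}h(Y_{I',J'})`: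
for any `I ⊇ I'` of size `p` and `J ⊇ J'` of size `q`,
`ψ I' J' = E[h(Y_{I,J}) | A_{I',J'}]` a.s. (independently of the choice of `I`, `J`). -/
def IsCondExpFamily [MeasurableSpace Ω] (μ : Measure Ω) (ξ η : ℕ → Ω → ℝ)
    (ζ : ℕ → ℕ → Ω → ℝ) {p q : ℕ} (h : (Fin p → Fin q → ℝ) → ℝ)
    (Y : ℕ → ℕ → Ω → ℝ) (ψ : Finset ℕ → Finset ℕ → Ω → ℝ) : Prop :=
  ∀ (I' J' I J : Finset ℕ), I.card = p → J.card = q → I' ⊆ I → J' ⊆ J →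
    ψ I' J' =ᵐ[μ] μ[ker h Y I J | latentAlg ξ η ζ I' J']

/-- `ψ₁ i` is the conditional expectation `ψ^{1,0}h(Y_{{i},∅}) = E[h(Y_{I,J}) | ξ_i]`,
for any `I ∋ i` of size `p` and any `J` of size `q`. -/
def IsRowCondExp [MeasurableSpace Ω] (μ : Measure Ω) (ξ η : ℕ → Ω → ℝ)
    (ζ : ℕ → ℕ → Ω → ℝ) {p q : ℕ} (h : (Fin p → Fin q → ℝ) → ℝ)
    (Y : ℕ → ℕ → Ω → ℝ) (ψ₁ : ℕ → Ω → ℝ) : Prop :=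
  ∀ (i : ℕ) (I J : Finset ℕ), I.card = p → J.card = q → i ∈ I →
    ψ₁ i =ᵐ[μ] μ[ker h Y I J | latentAlg ξ η ζ {i} ∅]

/-- `ψ₂ j` is the conditional expectation `ψ^{0,1}h(Y_{∅,{j}}) = E[h(Y_{I,J}) | η_j]`,
for any `I` of size `p` and any `J ∋ j` of size `q`. -/
def IsColCondExp [MeasurableSpace Ω] (μ : Measure Ω) (ξ η : ℕ → Ω → ℝ)
    (ζ : ℕ → ℕ → Ω → ℝ) {p q : ℕ} (h : (Fin p → Fin q → ℝ) → ℝ)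
    (Y : ℕ → ℕ → Ω → ℝ) (ψ₂ : ℕ → Ω → ℝ) : Prop :=
  ∀ (j : ℕ) (I J : Finset ℕ), I.card = p → J.card = q → j ∈ J →
    ψ₂ j =ᵐ[μ] μ[ker h Y I J | latentAlg ξ η ζ ∅ {j}]

/-- The Hoeffding-type projection `p^{r,c}h(Y_{I,J})` built from the family `ψ` of
conditional expectations, defined by the recursion
`p^{r,c}h(Y_{I,J}) = ψ^{r,c}h(Y_{I,J}) − Σ_{(I',J') ⊆ (I,J), (I',J') ≠ (I,J)} p^{r',c'}h(Y_{I',J'})`. -/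
def proj (ψ : Finset ℕ → Finset ℕ → Ω → ℝ) : Finset ℕ → Finset ℕ → Ω → ℝ
  | I, J =>
    ψ I J - ∑ P ∈ ((I.powerset ×ˢ J.powerset).erase (I, J)).attach,
      proj ψ P.1.1 P.1.2
termination_by I J => I.card + J.card
decreasing_by
  obtain ⟨hne, hmem⟩ := Finset.mem_erase.mp P.2
  rw [Finset.mem_product, Finset.mem_powerset, Finset.mem_powerset] at hmem
  rcases eq_or_ne P.1.1 I with h1 | h1
  · have h2 : P.1.2 ≠ J := fun h2 => hne (Prod.ext h1 h2)
    have hlt := Finset.card_lt_card (HasSubset.Subset.ssubset_of_ne hmem.2 h2)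
    have hle := Finset.card_le_card hmem.1
    omega
  · have hlt := Finset.card_lt_card (HasSubset.Subset.ssubset_of_ne hmem.1 h1)
    have hle := Finset.card_le_card hmem.2
    omega

/-- The `U`-statistic `U^h_{m,n}(Y)` of kernel `h`. -/
def UStat {p q : ℕ} (h : (Fin p → Fin q → ℝ) → ℝ) (Y : ℕ → ℕ → Ω → ℝ)
    (m n : ℕ) (ω : Ω) : ℝ :=
  (m.choose p : ℝ)⁻¹ * (n.choose q : ℝ)⁻¹ *
    ∑ I ∈ (Finset.range m).powersetCard p, ∑ J ∈ (Finset.range n).powersetCard q,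
      ker h Y I J ω

/-- `P^{r,c}_{m,n}h(Y)`, the `U`-statistic of kernel `p^{r,c}h`. -/
def PStat (ψ : Finset ℕ → Finset ℕ → Ω → ℝ) (r c m n : ℕ) (ω : Ω) : ℝ :=
  (m.choose r : ℝ)⁻¹ * (n.choose c : ℝ)⁻¹ *
    ∑ I ∈ (Finset.range m).powersetCard r, ∑ J ∈ (Finset.range n).powersetCard c,
      proj ψ I J ω

/-- The estimator `μ̂^{h,(i)}_N` of `ψ^{1,0}h(Y_{{i},∅})`: average of the kernel over all
`p × q` submatrices of the upper-left `m × n` corner whose row set contains `i`. -/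
def muHat {p q : ℕ} (h : (Fin p → Fin q → ℝ) → ℝ) (Y : ℕ → ℕ → Ω → ℝ)
    (m n i : ℕ) (ω : Ω) : ℝ :=
  ((m - 1).choose (p - 1) : ℝ)⁻¹ * (n.choose q : ℝ)⁻¹ *
    ∑ I ∈ ((Finset.range m).powersetCard p).filter (fun I => i ∈ I),
      ∑ J ∈ (Finset.range n).powersetCard q, ker h Y I J ω

/-- The estimator `ν̂^{h,(j)}_N` of `ψ^{0,1}h(Y_{∅,{j}})`. -/
def nuHat {p q : ℕ} (h : (Fin p → Fin q → ℝ) → ℝ) (Y : ℕ → ℕ → Ω → ℝ)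
    (m n j : ℕ) (ω : Ω) : ℝ :=
  (m.choose p : ℝ)⁻¹ * ((n - 1).choose (q - 1) : ℝ)⁻¹ *
    ∑ I ∈ (Finset.range m).powersetCard p,
      ∑ J ∈ ((Finset.range n).powersetCard q).filter (fun J => j ∈ J), ker h Y I J ω

/-- The covariance estimator `ĉ^{h₁,h₂;1,0}_N`. -/
def cHat10 {p q : ℕ} (h₁ h₂ : (Fin p → Fin q → ℝ) → ℝ) (Y : ℕ → ℕ → Ω → ℝ)
    (m n : ℕ) (ω : Ω) : ℝ :=
  (m.choose 2 : ℝ)⁻¹ *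
    ∑ i₂ ∈ Finset.range m, ∑ i₁ ∈ Finset.range i₂,
      (muHat h₁ Y m n i₁ ω - muHat h₁ Y m n i₂ ω) *
        (muHat h₂ Y m n i₁ ω - muHat h₂ Y m n i₂ ω) / 2

/-- The covariance estimator `ĉ^{h₁,h₂;0,1}_N`. -/
def cHat01 {p q : ℕ} (h₁ h₂ : (Fin p → Fin q → ℝ) → ℝ) (Y : ℕ → ℕ → Ω → ℝ)
    (m n : ℕ) (ω : Ω) : ℝ :=
  (n.choose 2 : ℝ)⁻¹ *
    ∑ j₂ ∈ Finset.range n, ∑ j₁ ∈ Finset.range j₂,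
      (nuHat h₁ Y m n j₁ ω - nuHat h₁ Y m n j₂ ω) *
        (nuHat h₂ Y m n j₁ ω - nuHat h₂ Y m n j₂ ω) / 2

/-- The variance estimator `v̂^{h;1,0}_N`. -/
def vHat10 {p q : ℕ} (h : (Fin p → Fin q → ℝ) → ℝ) (Y : ℕ → ℕ → Ω → ℝ)
    (m n : ℕ) (ω : Ω) : ℝ :=
  (m.choose 2 : ℝ)⁻¹ *
    ∑ i₂ ∈ Finset.range m, ∑ i₁ ∈ Finset.range i₂,
      (muHat h Y m n i₁ ω - muHat h Y m n i₂ ω) ^ 2 / 2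

/-- The variance estimator `v̂^{h;0,1}_N`. -/
def vHat01 {p q : ℕ} (h : (Fin p → Fin q → ℝ) → ℝ) (Y : ℕ → ℕ → Ω → ℝ)
    (m n : ℕ) (ω : Ω) : ℝ :=
  (n.choose 2 : ℝ)⁻¹ *
    ∑ j₂ ∈ Finset.range n, ∑ j₁ ∈ Finset.range j₂,
      (nuHat h Y m n j₁ ω - nuHat h Y m n j₂ ω) ^ 2 / 2

/-- The row-deleted `U`-statistic `U^{h,(−i,∅)}_N`. -/
def UStatRowDel {p q : ℕ} (h : (Fin p → Fin q → ℝ) → ℝ) (Y : ℕ → ℕ → Ω → ℝ)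
    (m n i : ℕ) (ω : Ω) : ℝ :=
  ((m - 1).choose p : ℝ)⁻¹ * (n.choose q : ℝ)⁻¹ *
    ∑ I ∈ ((Finset.range m).erase i).powersetCard p,
      ∑ J ∈ (Finset.range n).powersetCard q, ker h Y I J ω

/-- The column-deleted `U`-statistic `U^{h,(∅,−j)}_N`. -/
def UStatColDel {p q : ℕ} (h : (Fin p → Fin q → ℝ) → ℝ) (Y : ℕ → ℕ → Ω → ℝ)
    (m n j : ℕ) (ω : Ω) : ℝ :=
  (m.choose p : ℝ)⁻¹ * ((n - 1).choose q : ℝ)⁻¹ *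
    ∑ I ∈ (Finset.range m).powersetCard p,
      ∑ J ∈ ((Finset.range n).erase j).powersetCard q, ker h Y I J ω

/-- The extension `h̃` of a kernel `h` of size `p × q` to the size `p' × q'`:
`h̃(M) = [C(p',p) C(q',q)]⁻¹ Σ_{A,B} h(M_{A,B})`, the sum running over all row subsets `A`
of size `p` and column subsets `B` of size `q`, taken in increasing order. -/
def extKer {p q : ℕ} (p' q' : ℕ) (h : (Fin p → Fin q → ℝ) → ℝ)
    (M : Fin p' → Fin q' → ℝ) : ℝ :=
  (p'.choose p : ℝ)⁻¹ * (q'.choose q : ℝ)⁻¹ *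
    ∑ A ∈ ((Finset.univ : Finset (Fin p')).powersetCard p).attach,
      ∑ B ∈ ((Finset.univ : Finset (Fin q')).powersetCard q).attach,
        h fun a b =>
          M (A.1.orderEmbOfFin (Finset.mem_powersetCard.mp A.2).2 a)
            (B.1.orderEmbOfFin (Finset.mem_powersetCard.mp B.2).2 b)

/-- Convergence in distribution of a sequence of random elements towards a law `G`:
convergence of the expectations of every bounded continuous function. -/
def TendstoInDist {E : Type*} [MeasurableSpace Ω] [TopologicalSpace E] [MeasurableSpace E]
    (μ : Measure Ω) (X : ℕ → Ω → E) (G : Measure E) : Prop :=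
  ∀ f : BoundedContinuousFunction E ℝ,
    Tendsto (fun N => ∫ ω, f (X N ω) ∂μ) atTop (𝓝 (∫ x, f x ∂G))


/-! ### Auxiliary lemmas -/

section Aux

lemma indep_mono' {m0 m₁ m₂ m₁' m₂' : MeasurableSpace Ω} {μ : @Measure Ω m0}
    (h : Indep m₁ m₂ μ) (h1 : m₁' ≤ m₁) (h2 : m₂' ≤ m₂) : Indep m₁' m₂' μ := by
  rw [Indep_iff] at h ⊢
  exact fun t1 t2 ht1 ht2 => h t1 t2 (h1 _ ht1) (h2 _ ht2)

lemma setIntegral_inter_indep' {m₁ n : MeasurableSpace Ω} [m0 : MeasurableSpace Ω]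
    {μ : Measure Ω} [IsProbabilityMeasure μ]
    (hm₁ : m₁ ≤ m0) (hn : n ≤ m0)
    (hindep : Indep m₁ n μ) {W : Ω → ℝ}
    (hW : Integrable W μ) (hWm : StronglyMeasurable[m₁] W)
    {B C : Set Ω} (hB : MeasurableSet[m₁] B) (hC : MeasurableSet[n] C) :
    ∫ x in B ∩ C, W x ∂μ = (∫ x in B, W x ∂μ) * (μ C).toReal := by
  have hB0 : MeasurableSet[m0] B := hm₁ _ hB
  have hC0 : MeasurableSet[m0] C := hn _ hC
  have hfun : Set.indicator (B ∩ C) W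
      = fun ω => Set.indicator B W ω * Set.indicator C (fun _ => (1:ℝ)) ω := by
    funext ω
    by_cases hωB : ω ∈ B <;> by_cases hωC : ω ∈ C <;>
      simp [Set.indicator_apply, hωB, hωC, Set.mem_inter_iff]
  have hind : IndepFun (Set.indicator B W) (Set.indicator C (fun _ => (1:ℝ))) μ := by
    rw [IndepFun_iff_Indep]
    refine indep_mono' hindep ?_ ?_
    · exact Measurable.comap_le ((hWm.measurable).indicator hB)
    · exact Measurable.comap_le (measurable_const.indicator hC)
  have hiB : Integrable (Set.indicator B W) μ := hW.indicator hB0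
  have hiC : Integrable (Set.indicator C (fun _ => (1:ℝ))) μ := (integrable_const 1).indicator hC0
  calc ∫ x in B ∩ C, W x ∂μ = ∫ x, Set.indicator (B ∩ C) W x ∂μ :=
        (integral_indicator (hB0.inter hC0)).symm
    _ = ∫ x, Set.indicator B W x * Set.indicator C (fun _ => (1:ℝ)) x ∂μ := by rw [hfun]
    _ = (∫ x, Set.indicator B W x ∂μ) * ∫ x, Set.indicator C (fun _ => (1:ℝ)) x ∂μ :=
        hind.integral_mul_eq_mul_integral hiB.aestronglyMeasurable hiC.aestronglyMeasurable
    _ = (∫ x in B, W x ∂μ) * (μ C).toReal := by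
        rw [integral_indicator hB0, integral_indicator_const _ hC0]
        simp [measureReal_def]

lemma condexp_sup_indep' {m m₁ n : MeasurableSpace Ω} [m0 : MeasurableSpace Ω]
    {μ : Measure Ω} [IsProbabilityMeasure μ]
    (hm : m ≤ m₁) (hm₁ : m₁ ≤ m0) (hn : n ≤ m0)
    (hindep : Indep m₁ n μ) {Z : Ω → ℝ}
    (hZ : Integrable Z μ) (hZm : StronglyMeasurable[m₁] Z) :
    μ[Z | m ⊔ n] =ᵐ[μ] μ[Z | m] := by
  have hm0 : m ≤ m0 := hm.trans hm₁
  have hsup : m ⊔ n ≤ m0 := sup_le hm0 hn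
  set g := μ[Z | m] with hg
  have hgm : StronglyMeasurable[m] g := stronglyMeasurable_condExp
  have hgi : Integrable g μ := integrable_condExp
  set S : Set (Set Ω) := {s | ∃ B C, MeasurableSet[m] B ∧ MeasurableSet[n] C ∧ s = B ∩ C} with hS
  have hgen : m ⊔ n = MeasurableSpace.generateFrom S := by
    refine le_antisymm (sup_le ?_ ?_) (MeasurableSpace.generateFrom_le ?_)
    · intro t ht
      exact MeasurableSpace.measurableSet_generateFrom
        ⟨t, Set.univ, ht, MeasurableSet.univ, by simp⟩
    · intro t ht
      exact MeasurableSpace.measurableSet_generateFrom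
        ⟨Set.univ, t, MeasurableSet.univ, ht, by simp⟩
    · rintro s ⟨B, C, hB, hC, rfl⟩
      exact ((le_sup_left : m ≤ m ⊔ n) _ hB).inter ((le_sup_right : n ≤ m ⊔ n) _ hC)
  have hpi : IsPiSystem S := by
    rintro s ⟨B, C, hB, hC, rfl⟩ t ⟨B', C', hB', hC', rfl⟩ -
    exact ⟨B ∩ B', C ∩ C', hB.inter hB', hC.inter hC', by rw [Set.inter_inter_inter_comm]⟩
  have hkey : ∀ t, MeasurableSet[m ⊔ n] t → ∫ x in t, g x ∂μ = ∫ x in t, Z x ∂μ := by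
    refine @MeasurableSpace.induction_on_inter Ω (m ⊔ n)
      (fun t _ => ∫ x in t, g x ∂μ = ∫ x in t, Z x ∂μ) S hgen hpi (by simp) ?_ ?_ ?_
    · rintro s ⟨B, C, hB, hC, rfl⟩
      rw [setIntegral_inter_indep' hm₁ hn hindep hZ hZm (hm _ hB) hC,
        setIntegral_inter_indep' hm₁ hn hindep hgi (hgm.mono hm) (hm _ hB) hC,
        setIntegral_condExp hm0 hZ hB]
    · intro t ht hrec
      have ht0 : MeasurableSet[m0] t := hsup _ ht
      have h1 := integral_add_compl ht0 hgi
      have h2 := integral_add_compl ht0 hZ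
      have h3 : ∫ x, g x ∂μ = ∫ x, Z x ∂μ := by
        have := setIntegral_condExp hm0 hZ (MeasurableSet.univ (α := Ω) (m := m))
        simpa using this
      linarith
    · intro f hdisj hmeas hrec
      have hmeas0 : ∀ i, MeasurableSet[m0] (f i) := fun i => hsup _ (hmeas i)
      rw [integral_iUnion hmeas0 hdisj hgi.integrableOn,
        integral_iUnion hmeas0 hdisj hZ.integrableOn]
      exact tsum_congr hrec
  refine (ae_eq_condExp_of_forall_setIntegral_eq hsup hZ
    (fun s _ _ => hgi.integrableOn) (fun s hs _ => hkey s hs) ?_).symm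
  exact (hgm.mono (le_sup_left : m ≤ m ⊔ n)).aestronglyMeasurable

lemma aestronglyMeasurable'_finset_sum {ι : Type*} {m m0 : MeasurableSpace Ω}
    {μ : @Measure Ω m0} (s : Finset ι) (F : ι → Ω → ℝ)
    (h : ∀ i ∈ s, AEStronglyMeasurable[m] (F i) μ) :
    AEStronglyMeasurable[m] (∑ i ∈ s, F i) μ := by
  classical
  induction s using Finset.induction_on with
  | empty => simpa using StronglyMeasurable.aestronglyMeasurable (m := m) (μ := μ) (f := (0 : Ω → ℝ)) stronglyMeasurable_const
  | @insert a s ha ih =>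
    rw [Finset.sum_insert ha]
    exact (h a (Finset.mem_insert_self a s)).add
      (ih fun i hi => h i (Finset.mem_insert_of_mem hi))

/-- The labels of the latent variables attached to the pair of index sets `(I, J)`. -/
def labSet (I J : Finset ℕ) : Set (ℕ ⊕ (ℕ ⊕ ℕ × ℕ)) :=
  {t | match t with
    | .inl i => i ∈ I
    | .inr (.inl j) => j ∈ J
    | .inr (.inr ij) => ij.1 ∈ I ∧ ij.2 ∈ J}

lemma labSet_mono {I J I' J' : Finset ℕ} (hI : I ⊆ I') (hJ : J ⊆ J') :
    labSet I J ⊆ labSet I' J' := by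
  rintro (i | j | ⟨i, j⟩) ht
  · exact hI ht
  · exact hJ ht
  · exact ⟨hI ht.1, hJ ht.2⟩

lemma labSet_inter {K L I' J' : Finset ℕ} :
    labSet K L ∩ labSet I' J' = labSet (K ∩ I') (L ∩ J') := by
  ext t
  rcases t with i | j | ⟨i, j⟩ <;>
    simp [labSet, Set.mem_inter_iff, Finset.mem_inter] <;> tauto

/-- All the latent variables as a single family. -/
def lvar (ξ η : ℕ → Ω → ℝ) (ζ : ℕ → ℕ → Ω → ℝ) : (ℕ ⊕ (ℕ ⊕ ℕ × ℕ)) → Ω → ℝ :=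
  Sum.elim ξ (Sum.elim η fun ij : ℕ × ℕ => ζ ij.1 ij.2)

lemma latentAlg_eq_biSup [MeasurableSpace Ω] (ξ η : ℕ → Ω → ℝ) (ζ : ℕ → ℕ → Ω → ℝ)
    (I J : Finset ℕ) :
    latentAlg ξ η ζ I J
      = ⨆ t ∈ labSet I J, MeasurableSpace.comap (lvar ξ η ζ t) inferInstance := by
  refine le_antisymm (sup_le (sup_le ?_ ?_) ?_) ?_
  · exact iSup₂_le fun i hi =>
      le_iSup₂ (f := fun t (_ : t ∈ labSet I J) =>
        MeasurableSpace.comap (lvar ξ η ζ t) inferInstance) (Sum.inl i) hi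
  · exact iSup₂_le fun j hj =>
      le_iSup₂ (f := fun t (_ : t ∈ labSet I J) =>
        MeasurableSpace.comap (lvar ξ η ζ t) inferInstance) (Sum.inr (Sum.inl j)) hj
  · exact iSup₂_le fun i hi => iSup₂_le fun j hj =>
      le_iSup₂ (f := fun t (_ : t ∈ labSet I J) =>
        MeasurableSpace.comap (lvar ξ η ζ t) inferInstance) (Sum.inr (Sum.inr (i, j)))
        ⟨hi, hj⟩
  · refine iSup₂_le ?_
    rintro (i | j | ⟨i, j⟩) ht
    · exact le_sup_of_le_left (le_sup_of_le_left
        (le_iSup₂ (f := fun i' (_ : i' ∈ I) =>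
          MeasurableSpace.comap (ξ i') inferInstance) i ht))
    · exact le_sup_of_le_left (le_sup_of_le_right
        (le_iSup₂ (f := fun j' (_ : j' ∈ J) =>
          MeasurableSpace.comap (η j') inferInstance) j ht))
    · exact le_sup_of_le_right
        (le_trans (le_iSup₂ (f := fun j' (_ : j' ∈ J) =>
          MeasurableSpace.comap (ζ i j') inferInstance) j ht.2)
          (le_iSup₂ (f := fun i' (_ : i' ∈ I) =>
            ⨆ j' ∈ J, MeasurableSpace.comap (ζ i' j') inferInstance) i ht.1))

section Model

variable [m0 : MeasurableSpace Ω] {μ : Measure Ω}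
  {ξ η : ℕ → Ω → ℝ} {ζ : ℕ → ℕ → Ω → ℝ} {φ : ℝ → ℝ → ℝ → ℝ} {Y : ℕ → ℕ → Ω → ℝ}

lemma Model.meas_lvar (hmodel : Model μ ξ η ζ φ Y) :
    ∀ t, Measurable (lvar ξ η ζ t) := by
  rintro (i | j | ⟨i, j⟩)
  · exact hmodel.meas_ξ i
  · exact hmodel.meas_η j
  · exact hmodel.meas_ζ i j

lemma Model.latentAlg_le (hmodel : Model μ ξ η ζ φ Y) (I J : Finset ℕ) :
    latentAlg ξ η ζ I J ≤ m0 := by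
  rw [latentAlg_eq_biSup]
  exact iSup₂_le fun t _ => (hmodel.meas_lvar t).comap_le

lemma latentAlg_mono [MeasurableSpace Ω] (ξ' η' : ℕ → Ω → ℝ) (ζ' : ℕ → ℕ → Ω → ℝ)
    {I J I' J' : Finset ℕ} (hI : I ⊆ I') (hJ : J ⊆ J') :
    latentAlg ξ' η' ζ' I J ≤ latentAlg ξ' η' ζ' I' J' := by
  rw [latentAlg_eq_biSup, latentAlg_eq_biSup]
  exact biSup_mono (labSet_mono hI hJ)

/-- Key conditional-independence step: conditioning an `A_{K,L}`-measurable integrable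
function on `A_{I',J'}` is the same as conditioning on `A_{K ∩ I', L ∩ J'}`. -/
lemma Model.condexp_latentAlg_drop (hmodel : Model μ ξ η ζ φ Y) [IsProbabilityMeasure μ]
    {K L I' J' : Finset ℕ} {Z : Ω → ℝ}
    (hZ : Integrable Z μ) (hZm : AEStronglyMeasurable[latentAlg ξ η ζ K L] Z μ) :
    μ[Z | latentAlg ξ η ζ I' J'] =ᵐ[μ] μ[Z | latentAlg ξ η ζ (K ∩ I') (L ∩ J')] := by
  classical
  set X := lvar ξ η ζ with hX
  have hXm : ∀ t, Measurable (X t) := hmodel.meas_lvar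
  have hle : ∀ t, MeasurableSpace.comap (X t) inferInstance ≤ m0 :=
    fun t => (hXm t).comap_le
  have hiInd : iIndep (fun t => MeasurableSpace.comap (X t) inferInstance) μ :=
    hmodel.indep.iIndep
  set G : Set (ℕ ⊕ (ℕ ⊕ ℕ × ℕ)) → MeasurableSpace Ω :=
    fun S => ⨆ t ∈ S, MeasurableSpace.comap (X t) inferInstance with hG
  have hGle : ∀ S, G S ≤ m0 := fun S => iSup₂_le fun t _ => hle t
  set S₁ := labSet K L with hS₁
  set S₂ := labSet I' J' with hS₂
  -- the three σ-algebras
  have hmeq : latentAlg ξ η ζ (K ∩ I') (L ∩ J') = G (S₂ ∩ S₁) := by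
    rw [latentAlg_eq_biSup, hS₁, hS₂, Set.inter_comm, labSet_inter]
  have hm₁eq : latentAlg ξ η ζ K L = G S₁ := latentAlg_eq_biSup ξ η ζ K L
  have hsupeq : latentAlg ξ η ζ I' J' = G (S₂ ∩ S₁) ⊔ G (S₂ \ S₁) := by
    rw [latentAlg_eq_biSup]
    have : S₂ = (S₂ ∩ S₁) ∪ (S₂ \ S₁) := (Set.inter_union_diff S₂ S₁).symm
    conv_lhs => rw [show (labSet I' J') = (S₂ ∩ S₁) ∪ (S₂ \ S₁) from this]
    exact iSup_union
  have hindep : Indep (G S₁) (G (S₂ \ S₁)) μ :=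
    indep_iSup_of_disjoint hle hiInd disjoint_sdiff_self_right
  -- replace `Z` by a genuinely measurable representative
  set Z' := hZm.mk Z with hZ'
  have hZ'm : StronglyMeasurable[G S₁] Z' := by
    rw [← hm₁eq]; exact hZm.stronglyMeasurable_mk
  have hZZ' : Z =ᵐ[μ] Z' := hZm.ae_eq_mk
  have hZ'i : Integrable Z' μ := hZ.congr hZZ'
  have hcore : μ[Z' | G (S₂ ∩ S₁) ⊔ G (S₂ \ S₁)] =ᵐ[μ] μ[Z' | G (S₂ ∩ S₁)] :=
    condexp_sup_indep' (biSup_mono Set.inter_subset_right) (hGle S₁) (hGle _)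
      hindep hZ'i hZ'm
  calc μ[Z | latentAlg ξ η ζ I' J'] =ᵐ[μ] μ[Z' | latentAlg ξ η ζ I' J'] :=
        condExp_congr_ae hZZ'
    _ = μ[Z' | G (S₂ ∩ S₁) ⊔ G (S₂ \ S₁)] := by rw [hsupeq]
    _ =ᵐ[μ] μ[Z' | G (S₂ ∩ S₁)] := hcore
    _ = μ[Z' | latentAlg ξ η ζ (K ∩ I') (L ∩ J')] := by rw [hmeq]
    _ =ᵐ[μ] μ[Z | latentAlg ξ η ζ (K ∩ I') (L ∩ J')] := condExp_congr_ae hZZ'.symm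

end Model

end Aux


section Proj

lemma eventuallyEq_finset_sum {ι : Type*} [MeasurableSpace Ω] {μ : Measure Ω}
    (s : Finset ι) (f g : ι → Ω → ℝ) (h : ∀ i ∈ s, f i =ᵐ[μ] g i) :
    ∑ i ∈ s, f i =ᵐ[μ] ∑ i ∈ s, g i := by
  classical
  induction s using Finset.induction_on with
  | empty => simp
  | @insert a s ha ih =>
    rw [Finset.sum_insert ha, Finset.sum_insert ha]
    exact (h a (Finset.mem_insert_self a s)).add
      (ih fun i hi => h i (Finset.mem_insert_of_mem hi))

lemma mem_erase_powerset_product {K L : Finset ℕ} {P : Finset ℕ × Finset ℕ}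
    (hP : P ∈ (K.powerset ×ˢ L.powerset).erase (K, L)) :
    P.1 ⊆ K ∧ P.2 ⊆ L ∧ P.1.card + P.2.card < K.card + L.card := by
  obtain ⟨hne, hmem⟩ := Finset.mem_erase.mp hP
  rw [Finset.mem_product, Finset.mem_powerset, Finset.mem_powerset] at hmem
  refine ⟨hmem.1, hmem.2, ?_⟩
  rcases eq_or_ne P.1 K with h1 | h1
  · have h2 : P.2 ≠ L := fun h2 => hne (Prod.ext h1 h2)
    have hlt := Finset.card_lt_card (hmem.2.ssubset_of_ne h2)
    have hle := Finset.card_le_card hmem.1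
    omega
  · have hlt := Finset.card_lt_card (hmem.1.ssubset_of_ne h1)
    have hle := Finset.card_le_card hmem.2
    omega

variable [m0 : MeasurableSpace Ω] {μ : Measure Ω} [IsProbabilityMeasure μ]
  {ξ η : ℕ → Ω → ℝ} {ζ : ℕ → ℕ → Ω → ℝ} {φ : ℝ → ℝ → ℝ → ℝ} {Y : ℕ → ℕ → Ω → ℝ}
  {p q : ℕ} {h : (Fin p → Fin q → ℝ) → ℝ} {ψ : Finset ℕ → Finset ℕ → Ω → ℝ}

omit [IsProbabilityMeasure μ] in
lemma psi_reg (hψ : IsCondExpFamily μ ξ η ζ h Y ψ) {K L : Finset ℕ}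
    (hK : K.card ≤ p) (hL : L.card ≤ q) :
    Integrable (ψ K L) μ ∧ AEStronglyMeasurable[latentAlg ξ η ζ K L] (ψ K L) μ := by
  obtain ⟨I, hKI, hIcard⟩ := Infinite.exists_superset_card_eq K p hK
  obtain ⟨J, hLJ, hJcard⟩ := Infinite.exists_superset_card_eq L q hL
  have heq := hψ K L I J hIcard hJcard hKI hLJ
  exact ⟨integrable_condExp.congr heq.symm,
    (stronglyMeasurable_condExp.aestronglyMeasurable).congr heq.symm⟩

omit m0 in
lemma proj_eq (ψ' : Finset ℕ → Finset ℕ → Ω → ℝ) (K L : Finset ℕ) :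
    proj ψ' K L = ψ' K L -
      ∑ P ∈ ((K.powerset ×ˢ L.powerset).erase (K, L)).attach, proj ψ' P.1.1 P.1.2 := by
  rw [proj]

omit [IsProbabilityMeasure μ] in
lemma proj_reg (hψ : IsCondExpFamily μ ξ η ζ h Y ψ) :
    ∀ n K L, K.card + L.card = n → K.card ≤ p → L.card ≤ q →
      Integrable (proj ψ K L) μ ∧
        AEStronglyMeasurable[latentAlg ξ η ζ K L] (proj ψ K L) μ := by
  intro n
  induction n using Nat.strong_induction_on with
  | _ n ih =>
    intro K L hn hK hL
    rw [proj_eq]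
    have hterm : ∀ P : {x // x ∈ (K.powerset ×ˢ L.powerset).erase (K, L)},
        Integrable (proj ψ P.1.1 P.1.2) μ ∧
          AEStronglyMeasurable[latentAlg ξ η ζ P.1.1 P.1.2] (proj ψ P.1.1 P.1.2) μ := by
      intro P
      obtain ⟨h1, h2, h3⟩ := mem_erase_powerset_product P.2
      exact ih _ (by omega) P.1.1 P.1.2 rfl
        (le_trans (Finset.card_le_card h1) hK) (le_trans (Finset.card_le_card h2) hL)
    constructor
    · exact ((psi_reg hψ hK hL).1).sub
        (integrable_finset_sum' _ fun P _ => (hterm P).1)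
    · refine ((psi_reg hψ hK hL).2).sub
        (aestronglyMeasurable'_finset_sum _ _ fun P _ => ?_)
      obtain ⟨h1, h2, _⟩ := mem_erase_powerset_product P.2
      exact (hterm P).2.mono (latentAlg_mono ξ η ζ h1 h2)

omit m0 in
lemma sum_proj_powerset (ψ' : Finset ℕ → Finset ℕ → Ω → ℝ) (K L : Finset ℕ) :
    ∑ P ∈ K.powerset ×ˢ L.powerset, proj ψ' P.1 P.2 = ψ' K L := by
  classical
  have hmem : (K, L) ∈ K.powerset ×ˢ L.powerset := by
    simp [Finset.mem_product]
  rw [← Finset.sum_erase_add _ _ hmem, proj_eq]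
  have hatt : ∑ P ∈ ((K.powerset ×ˢ L.powerset).erase (K, L)).attach, proj ψ' P.1.1 P.1.2
      = ∑ P ∈ (K.powerset ×ˢ L.powerset).erase (K, L), proj ψ' P.1 P.2 :=
    Finset.sum_attach ((K.powerset ×ˢ L.powerset).erase (K, L)) (fun P => proj ψ' P.1 P.2)
  rw [hatt]
  abel

lemma proj_condexp_zero (hmodel : Model μ ξ η ζ φ Y)
    (hψ : IsCondExpFamily μ ξ η ζ h Y ψ) :
    ∀ n K L, K.card + L.card = n → K.card ≤ p → L.card ≤ q →
      ∀ K' L', K' ⊆ K → L' ⊆ L → (K', L') ≠ (K, L) →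
        μ[proj ψ K L | latentAlg ξ η ζ K' L'] =ᵐ[μ] 0 := by
  intro n
  induction n using Nat.strong_induction_on with
  | _ n ih =>
    intro K L hn hK hL K' L' hK' hL' hne
    classical
    have hA'le : latentAlg ξ η ζ K' L' ≤ m0 := hmodel.latentAlg_le K' L'
    set S := (K.powerset ×ˢ L.powerset).erase (K, L) with hSdef
    have hterm : ∀ P : {x // x ∈ S},
        Integrable (proj ψ P.1.1 P.1.2) μ ∧
          AEStronglyMeasurable[latentAlg ξ η ζ P.1.1 P.1.2] (proj ψ P.1.1 P.1.2) μ := by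
      intro P
      obtain ⟨h1, h2, _⟩ := mem_erase_powerset_product P.2
      exact proj_reg hψ _ P.1.1 P.1.2 rfl
        (le_trans (Finset.card_le_card h1) hK) (le_trans (Finset.card_le_card h2) hL)
    -- split the conditional expectation
    have hψKL := psi_reg hψ hK hL
    have hsum_int : Integrable (∑ P ∈ S.attach, proj ψ P.1.1 P.1.2) μ :=
      integrable_finset_sum' _ fun P _ => (hterm P).1
    have hsplit : μ[proj ψ K L | latentAlg ξ η ζ K' L'] =ᵐ[μ]
        μ[ψ K L | latentAlg ξ η ζ K' L'] - μ[∑ P ∈ S.attach, proj ψ P.1.1 P.1.2 | latentAlg ξ η ζ K' L'] := by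
      rw [proj_eq]
      exact condExp_sub hψKL.1 hsum_int _
    have hsum : μ[∑ P ∈ S.attach, proj ψ P.1.1 P.1.2 | latentAlg ξ η ζ K' L'] =ᵐ[μ]
        ∑ P ∈ S.attach, μ[proj ψ P.1.1 P.1.2 | latentAlg ξ η ζ K' L'] :=
      condExp_finsetSum (fun P _ => (hterm P).1) _
    -- the ψ term
    have hKle : K.card ≤ p := hK
    obtain ⟨I, hKI, hIcard⟩ := Infinite.exists_superset_card_eq K p hK
    obtain ⟨J, hLJ, hJcard⟩ := Infinite.exists_superset_card_eq L q hL
    have hψterm : μ[ψ K L | latentAlg ξ η ζ K' L'] =ᵐ[μ] ψ K' L' := by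
      calc μ[ψ K L | latentAlg ξ η ζ K' L'] =ᵐ[μ] μ[μ[ker h Y I J | latentAlg ξ η ζ K L] | latentAlg ξ η ζ K' L'] :=
            condExp_congr_ae (hψ K L I J hIcard hJcard hKI hLJ)
        _ =ᵐ[μ] μ[ker h Y I J | latentAlg ξ η ζ K' L'] :=
            condExp_condExp_of_le (latentAlg_mono ξ η ζ hK' hL') (hmodel.latentAlg_le K L)
        _ =ᵐ[μ] ψ K' L' :=
            (hψ K' L' I J hIcard hJcard (hK'.trans hKI) (hL'.trans hLJ)).symm
    -- the projection terms
    set g : (Finset ℕ × Finset ℕ) → Ω → ℝ :=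
      fun P => if P.1 ⊆ K' ∧ P.2 ⊆ L' then proj ψ P.1 P.2 else 0 with hg
    have hper : ∀ P ∈ S.attach, μ[proj ψ P.1.1 P.1.2 | latentAlg ξ η ζ K' L'] =ᵐ[μ] g P.1 := by
      intro P _
      obtain ⟨h1, h2, h3⟩ := mem_erase_powerset_product P.2
      by_cases hc : P.1.1 ⊆ K' ∧ P.1.2 ⊆ L'
      · have : g P.1 = proj ψ P.1.1 P.1.2 := by rw [hg]; simp [hc]
        rw [this]
        exact condExp_of_aestronglyMeasurable' hA'le
          ((hterm P).2.mono (latentAlg_mono ξ η ζ hc.1 hc.2)) (hterm P).1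
      · have hgz : g P.1 = 0 := by rw [hg]; simp [hc]
        rw [hgz]
        have hdrop := hmodel.condexp_latentAlg_drop (I' := K') (J' := L')
          (hterm P).1 (hterm P).2
        refine hdrop.trans ?_
        have hne' : (P.1.1 ∩ K', P.1.2 ∩ L') ≠ (P.1.1, P.1.2) := by
          intro hcon
          apply hc
          rw [Prod.mk.injEq] at hcon
          exact ⟨Finset.inter_eq_left.mp hcon.1, Finset.inter_eq_left.mp hcon.2⟩
        exact ih _ (by omega) P.1.1 P.1.2 rfl
          (le_trans (Finset.card_le_card h1) hK) (le_trans (Finset.card_le_card h2) hL)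
          (P.1.1 ∩ K') (P.1.2 ∩ L') Finset.inter_subset_left Finset.inter_subset_left hne'
    have hsum2 : ∑ P ∈ S.attach, μ[proj ψ P.1.1 P.1.2 | latentAlg ξ η ζ K' L'] =ᵐ[μ]
        ∑ P ∈ S.attach, g P.1 :=
      eventuallyEq_finset_sum _ _ _ hper
    -- evaluate the surviving sum
    have hfilter : S.filter (fun P => P.1 ⊆ K' ∧ P.2 ⊆ L') = K'.powerset ×ˢ L'.powerset := by
      ext P
      rw [Finset.mem_filter, hSdef, Finset.mem_erase, Finset.mem_product, Finset.mem_product,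
        Finset.mem_powerset, Finset.mem_powerset, Finset.mem_powerset, Finset.mem_powerset]
      constructor
      · rintro ⟨⟨-, -⟩, h1, h2⟩
        exact ⟨h1, h2⟩
      · rintro ⟨h1, h2⟩
        refine ⟨⟨?_, h1.trans hK', h2.trans hL'⟩, h1, h2⟩
        intro hcon
        apply hne
        have e1 : P.1 = K := congrArg Prod.fst hcon
        have e2 : P.2 = L := congrArg Prod.snd hcon
        exact Prod.ext (Finset.Subset.antisymm hK' (e1 ▸ h1))
          (Finset.Subset.antisymm hL' (e2 ▸ h2))
    have hsum3 : ∑ P ∈ S.attach, g P.1 = ψ K' L' := by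
      have h1 : ∑ P ∈ S.attach, g P.1 = ∑ P ∈ S, g P := Finset.sum_attach S g
      rw [h1, hg]
      rw [← Finset.sum_filter, hfilter]
      exact sum_proj_powerset ψ K' L'
    -- put everything together
    calc μ[proj ψ K L | latentAlg ξ η ζ K' L'] =ᵐ[μ]
        μ[ψ K L | latentAlg ξ η ζ K' L'] - μ[∑ P ∈ S.attach, proj ψ P.1.1 P.1.2 | latentAlg ξ η ζ K' L'] := hsplit
      _ =ᵐ[μ] ψ K' L' - ∑ P ∈ S.attach, g P.1 :=
          hψterm.sub (hsum.trans hsum2)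
      _ = ψ K' L' - ψ K' L' := by rw [hsum3]
      _ = 0 := by simp

end Proj

/-- conditionally centered projections: for `(0,0) < (r,c) ≤ (p,q)`,
index sets `I` of size `r`, `J` of size `c` and subsets `I' ⊆ I`, `J' ⊆ J` with
`(I',J') ≠ (I,J)`, one has `E[p^{r,c}h(Y_{I,J}) | A_{I',J'}] = 0` a.s. -/
theorem stmt_0
    [MeasurableSpace Ω] (μ : Measure Ω) [IsProbabilityMeasure μ]
    (ξ η : ℕ → Ω → ℝ) (ζ : ℕ → ℕ → Ω → ℝ) (φ : ℝ → ℝ → ℝ → ℝ) (Y : ℕ → ℕ → Ω → ℝ)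
    (hmodel : Model μ ξ η ζ φ Y)
    (p q : ℕ) (hp : 1 ≤ p) (hq : 1 ≤ q)
    (h : (Fin p → Fin q → ℝ) → ℝ) (hsym : SymKernel p q h)
    (hint : Integrable (ker h Y (Finset.range p) (Finset.range q)) μ)
    (ψ : Finset ℕ → Finset ℕ → Ω → ℝ)
    (hψ : IsCondExpFamily μ ξ η ζ h Y ψ)
    (r c : ℕ) (hrc0 : (0, 0) < (r, c)) (hrcpq : (r, c) ≤ (p, q))
    (I J : Finset ℕ) (hI : I.card = r) (hJ : J.card = c)
    (I' J' : Finset ℕ) (hI' : I' ⊆ I) (hJ' : J' ⊆ J) (hne : (I', J') ≠ (I, J)) :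
    μ[proj ψ I J | latentAlg ξ η ζ I' J'] =ᵐ[μ] 0 := by
  exact proj_condexp_zero hmodel hψ (I.card + J.card) I J rfl
    (by rw [hI]; exact hrcpq.1) (by rw [hJ]; exact hrcpq.2) I' J' hI' hJ' hne

end RCEU
end
end

section
/- For every N with m_N > p and n_N > q, the variance estimators satisfy the exact algebraic identities v̂^{h;1,0}_N = ((m_N − p)²/(p²(m_N − 1))) · Σ_{i=1}^{m_N} (U^h_N − U^{h,(−i,∅)}_N)² and v̂^{h;0,1}_N = ((n_N − q)²/(q²(n_N − 1))) · Σ_{j=1}^{n_N} (U^h_N − U^{h,(∅,−j)}_N)², pointwise on the sample space. -/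
open MeasureTheory ProbabilityTheory Filter
open scoped BigOperators NNReal Topology

noncomputable section

namespace RCEU

variable {Ω : Type*}

lemma tri_sum (M : ℕ) (u : ℕ → ℝ) :
    ∑ i₂ ∈ Finset.range M, ∑ i₁ ∈ Finset.range i₂, (u i₁ - u i₂) ^ 2
      = M * ∑ i ∈ Finset.range M, u i ^ 2 - (∑ i ∈ Finset.range M, u i) ^ 2 := by
  induction M with
  | zero => simp
  | succ M ih =>
    rw [Finset.sum_range_succ, ih, Finset.sum_range_succ (fun i => u i ^ 2),
      Finset.sum_range_succ u]
    have h1 : ∑ i₁ ∈ Finset.range M, (u i₁ - u M) ^ 2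
        = ∑ i ∈ Finset.range M, u i ^ 2 - 2 * u M * ∑ i ∈ Finset.range M, u i
          + M * u M ^ 2 := by
      have h2 : ∀ i ∈ Finset.range M, (u i - u M) ^ 2
          = u i ^ 2 - 2 * u M * u i + u M ^ 2 := fun i _ => by ring
      rw [Finset.sum_congr rfl h2, Finset.sum_add_distrib, Finset.sum_sub_distrib,
        ← Finset.mul_sum, Finset.sum_const, Finset.card_range, nsmul_eq_mul]
    rw [h1]; push_cast; ring

lemma jackknife (M p : ℕ) (hp : 1 ≤ p) (hpM : p < M) (ε : ℝ) (g : Finset ℕ → ℝ) :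
    (M.choose 2 : ℝ)⁻¹ *
      ∑ i₂ ∈ Finset.range M, ∑ i₁ ∈ Finset.range i₂,
        (((M - 1).choose (p - 1) : ℝ)⁻¹ * ε *
            ∑ I ∈ ((Finset.range M).powersetCard p).filter (fun I => i₁ ∈ I), g I
          - ((M - 1).choose (p - 1) : ℝ)⁻¹ * ε *
            ∑ I ∈ ((Finset.range M).powersetCard p).filter (fun I => i₂ ∈ I), g I) ^ 2 / 2
    = ((M : ℝ) - p) ^ 2 / ((p : ℝ) ^ 2 * ((M : ℝ) - 1)) *
      ∑ i ∈ Finset.range M,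
        ((M.choose p : ℝ)⁻¹ * ε * ∑ I ∈ (Finset.range M).powersetCard p, g I
          - ((M - 1).choose p : ℝ)⁻¹ * ε *
            ∑ I ∈ ((Finset.range M).erase i).powersetCard p, g I) ^ 2 := by
  set S : ℝ := ∑ I ∈ (Finset.range M).powersetCard p, g I with hS
  set t : ℕ → ℝ := fun i => ∑ I ∈ ((Finset.range M).erase i).powersetCard p, g I with ht
  -- filter description
  have hfilter : ∀ i : ℕ, ((Finset.range M).erase i).powersetCard p
      = ((Finset.range M).powersetCard p).filter (fun I => i ∉ I) := by
    intro i
    ext I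
    simp only [Finset.mem_powersetCard, Finset.mem_filter, Finset.subset_erase]
    tauto
  have hfi : ∀ i : ℕ,
      ∑ I ∈ ((Finset.range M).powersetCard p).filter (fun I => i ∈ I), g I = S - t i := by
    intro i
    have h0 := Finset.sum_filter_add_sum_filter_not ((Finset.range M).powersetCard p)
      (fun I => i ∈ I) g
    have h1 : t i = ∑ I ∈ ((Finset.range M).powersetCard p).filter (fun I => i ∉ I), g I := by
      rw [ht]; simp only [hfilter]
    rw [h1]; linarith
  -- sum of the t i
  have hsum_t : ∑ i ∈ Finset.range M, t i = ((M : ℝ) - p) * S := by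
    have h2 : ∀ i ∈ Finset.range M, t i
        = ∑ I ∈ (Finset.range M).powersetCard p, if i ∉ I then g I else 0 := by
      intro i _
      rw [ht]; simp only [hfilter]
      rw [Finset.sum_filter]
    rw [Finset.sum_congr rfl h2, Finset.sum_comm]
    have h3 : ∀ I ∈ (Finset.range M).powersetCard p,
        (∑ i ∈ Finset.range M, if i ∉ I then g I else 0) = ((M : ℝ) - p) * g I := by
      intro I hI
      rw [Finset.mem_powersetCard] at hI
      rw [← Finset.sum_filter]
      have h4 : (Finset.range M).filter (fun i => i ∉ I) = Finset.range M \ I := by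
        rw [Finset.sdiff_eq_filter]
      rw [h4, Finset.sum_const, Finset.card_sdiff_of_subset hI.1, Finset.card_range, hI.2,
        nsmul_eq_mul, Nat.cast_sub hpM.le]
    rw [Finset.sum_congr rfl h3, ← Finset.mul_sum, hS]
  set c : ℝ := ((M - 1).choose (p - 1) : ℝ)⁻¹ * ε with hc
  set b : ℝ := ((M - 1).choose p : ℝ)⁻¹ * ε with hb
  set a : ℝ := (M.choose p : ℝ)⁻¹ * ε with ha
  set X : ℝ := ∑ i ∈ Finset.range M, t i ^ 2 with hX
  have hL : ∑ i₂ ∈ Finset.range M, ∑ i₁ ∈ Finset.range i₂,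
      (c * ∑ I ∈ ((Finset.range M).powersetCard p).filter (fun I => i₁ ∈ I), g I
        - c * ∑ I ∈ ((Finset.range M).powersetCard p).filter (fun I => i₂ ∈ I), g I) ^ 2 / 2
      = c ^ 2 / 2 * ((M : ℝ) * X - (((M : ℝ) - p) * S) ^ 2) := by
    have h5 : ∀ i₂ ∈ Finset.range M, ∀ i₁ ∈ Finset.range i₂,
        (c * ∑ I ∈ ((Finset.range M).powersetCard p).filter (fun I => i₁ ∈ I), g I
          - c * ∑ I ∈ ((Finset.range M).powersetCard p).filter (fun I => i₂ ∈ I), g I) ^ 2 / 2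
        = c ^ 2 / 2 * (t i₁ - t i₂) ^ 2 := by
      intro i₂ _ i₁ _
      rw [hfi, hfi]; ring
    calc ∑ i₂ ∈ Finset.range M, ∑ i₁ ∈ Finset.range i₂,
          (c * ∑ I ∈ ((Finset.range M).powersetCard p).filter (fun I => i₁ ∈ I), g I
            - c * ∑ I ∈ ((Finset.range M).powersetCard p).filter (fun I => i₂ ∈ I), g I) ^ 2 / 2
        = ∑ i₂ ∈ Finset.range M, ∑ i₁ ∈ Finset.range i₂, c ^ 2 / 2 * (t i₁ - t i₂) ^ 2 := by
          exact Finset.sum_congr rfl fun i₂ h₂ =>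
            Finset.sum_congr rfl fun i₁ h₁ => h5 i₂ h₂ i₁ h₁
      _ = c ^ 2 / 2 * ∑ i₂ ∈ Finset.range M, ∑ i₁ ∈ Finset.range i₂, (t i₁ - t i₂) ^ 2 := by
          rw [Finset.mul_sum]
          exact Finset.sum_congr rfl fun i₂ _ => by rw [Finset.mul_sum]
      _ = c ^ 2 / 2 * ((M : ℝ) * X - (((M : ℝ) - p) * S) ^ 2) := by
          rw [tri_sum, hsum_t]
  have hR : ∑ i ∈ Finset.range M, (a * S - b * t i) ^ 2
      = (M : ℝ) * (a * S) ^ 2 - 2 * a * b * S * (((M : ℝ) - p) * S) + b ^ 2 * X := by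
    have h6 : ∀ i ∈ Finset.range M, (a * S - b * t i) ^ 2
        = (a * S) ^ 2 - 2 * a * b * S * t i + b ^ 2 * t i ^ 2 := fun i _ => by ring
    rw [Finset.sum_congr rfl h6, Finset.sum_add_distrib, Finset.sum_sub_distrib,
      Finset.sum_const, Finset.card_range, nsmul_eq_mul, ← Finset.mul_sum, ← Finset.mul_sum,
      hsum_t, hX]
  rw [hL, hR]
  -- now pure arithmetic with binomial identities
  have hM1 : 1 ≤ M := hp.trans hpM.le
  have hple : p ≤ M - 1 := by omega
  have hcp_ne : ((M - 1).choose p : ℝ) ≠ 0 := by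
    exact_mod_cast (Nat.choose_pos hple).ne'
  have hI1 : (p : ℝ) * ((M - 1).choose p : ℝ) = ((M : ℝ) - p) * ((M - 1).choose (p - 1) : ℝ) := by
    have := Nat.choose_succ_right_eq (M - 1) (p - 1)
    have hp1 : p - 1 + 1 = p := by omega
    rw [hp1] at this
    have hsub : M - 1 - (p - 1) = M - p := by omega
    rw [hsub] at this
    have hcastR : ((M - 1).choose p : ℝ) * (p : ℝ)
        = ((M - 1).choose (p - 1) : ℝ) * ((M - p : ℕ) : ℝ) := by
      exact_mod_cast this
    rw [Nat.cast_sub hpM.le] at hcastR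
    linarith
  have hI2 : (M : ℝ) * ((M - 1).choose p : ℝ) = ((M : ℝ) - p) * (M.choose p : ℝ) := by
    have h7 := Nat.choose_mul_succ_eq (M - 1) p
    have hM : M - 1 + 1 = M := by omega
    rw [hM] at h7
    have hcastR : ((M - 1).choose p : ℝ) * (M : ℝ)
        = (M.choose p : ℝ) * ((M - p : ℕ) : ℝ) := by
      exact_mod_cast h7
    rw [Nat.cast_sub hpM.le] at hcastR
    linarith
  have hC2 : (M.choose 2 : ℝ) = (M : ℝ) * ((M : ℝ) - 1) / 2 := by
    have h8 : 2 * M.choose 2 = M * (M - 1) := by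
      rw [Nat.choose_two_right]
      have : 2 ∣ M * (M - 1) := by
        rcases Nat.even_or_odd M with he | ho
        · exact Dvd.dvd.mul_right he.two_dvd _
        · exact Dvd.dvd.mul_left (Nat.Odd.sub_odd ho odd_one).two_dvd _
      omega
    have hcast : (2 : ℝ) * (M.choose 2 : ℝ) = ((M * (M - 1) : ℕ) : ℝ) := by
      exact_mod_cast h8
    rw [Nat.cast_mul, Nat.cast_sub hM1] at hcast
    push_cast at hcast
    linarith
  -- express the other two binomials in terms of (M-1).choose p
  have hMp_ne : (M : ℝ) - p ≠ 0 := by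
    have : (p : ℝ) < M := by exact_mod_cast hpM
    linarith
  have hp_ne : (p : ℝ) ≠ 0 := by positivity
  have hM_ne : (M : ℝ) ≠ 0 := by positivity
  have hM1_ne : (M : ℝ) - 1 ≠ 0 := by
    have h9 : (1 : ℝ) < M := by exact_mod_cast hpM.trans_le' hp
    linarith
  have e1 : ((M - 1).choose (p - 1) : ℝ) = (p : ℝ) * ((M - 1).choose p : ℝ) / ((M : ℝ) - p) := by
    field_simp
    linarith
  have e2 : (M.choose p : ℝ) = (M : ℝ) * ((M - 1).choose p : ℝ) / ((M : ℝ) - p) := by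
    field_simp
    linarith
  rw [hc, hb, ha, e1, e2, hC2]
  field_simp
  ring

/-- jackknife-type algebraic identities for the variance estimators:
for `m_N > p` and `n_N > q`, pointwise on the sample space,
`v̂^{h;1,0}_N = ((m_N−p)²/(p²(m_N−1))) Σ_i (U^h_N − U^{h,(−i,∅)}_N)²` and
`v̂^{h;0,1}_N = ((n_N−q)²/(q²(n_N−1))) Σ_j (U^h_N − U^{h,(∅,−j)}_N)²`. -/
theorem stmt_15 {Ω : Type*} (Y : ℕ → ℕ → Ω → ℝ)
    (p q : ℕ) (hp : 1 ≤ p) (hq : 1 ≤ q)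
    (h : (Fin p → Fin q → ℝ) → ℝ) (hsym : SymKernel p q h)
    (m n : ℕ → ℕ) (N : ℕ) (hmN : p < m N) (hnN : q < n N) :
    (∀ ω : Ω, vHat10 h Y (m N) (n N) ω =
      ((m N : ℝ) - p) ^ 2 / ((p : ℝ) ^ 2 * ((m N : ℝ) - 1)) *
        ∑ i ∈ Finset.range (m N),
          (UStat h Y (m N) (n N) ω - UStatRowDel h Y (m N) (n N) i ω) ^ 2) ∧
    (∀ ω : Ω, vHat01 h Y (m N) (n N) ω =
      ((n N : ℝ) - q) ^ 2 / ((q : ℝ) ^ 2 * ((n N : ℝ) - 1)) *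
        ∑ j ∈ Finset.range (n N),
          (UStat h Y (m N) (n N) ω - UStatColDel h Y (m N) (n N) j ω) ^ 2) := by
  constructor
  · intro ω
    have hg := jackknife (m N) p hp hmN ((n N).choose q : ℝ)⁻¹
      (fun I => ∑ J ∈ (Finset.range (n N)).powersetCard q, ker h Y I J ω)
    simpa only [vHat10, muHat, UStat, UStatRowDel] using hg
  · intro ω
    have hg := jackknife (n N) q hq hnN ((m N).choose p : ℝ)⁻¹
      (fun J => ∑ I ∈ (Finset.range (m N)).powersetCard p, ker h Y I J ω)
    have hnu : ∀ j, nuHat h Y (m N) (n N) j ω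
        = (((n N) - 1).choose (q - 1) : ℝ)⁻¹ * ((m N).choose p : ℝ)⁻¹ *
          ∑ J ∈ ((Finset.range (n N)).powersetCard q).filter (fun J => j ∈ J),
            ∑ I ∈ (Finset.range (m N)).powersetCard p, ker h Y I J ω := by
      intro j
      rw [nuHat, Finset.sum_comm]
      ring
    have hU : UStat h Y (m N) (n N) ω
        = ((n N).choose q : ℝ)⁻¹ * ((m N).choose p : ℝ)⁻¹ *
          ∑ J ∈ (Finset.range (n N)).powersetCard q,
            ∑ I ∈ (Finset.range (m N)).powersetCard p, ker h Y I J ω := by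
      rw [UStat, Finset.sum_comm]
      ring
    have hUD : ∀ j, UStatColDel h Y (m N) (n N) j ω
        = (((n N) - 1).choose q : ℝ)⁻¹ * ((m N).choose p : ℝ)⁻¹ *
          ∑ J ∈ ((Finset.range (n N)).erase j).powersetCard q,
            ∑ I ∈ (Finset.range (m N)).powersetCard p, ker h Y I J ω := by
      intro j
      rw [UStatColDel, Finset.sum_comm]
      ring
    simp only [vHat01, hnu, hU, hUD]
    exact hg

end RCEU
end
end
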